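/- arXiv:2104.06576 — 6 statements merged into one kernel-verified Lean document; each statement's English description precedes it below -/
import Mathlib

section
/- For all real numbers $v, t$ and any $1 \le p \le 2$, we have $|v+t|^p/2 + |v-t|^p/2 \le |v|^p + |t|^p$. -/
/-!
By the parallelogram law, `((v + t)² + (v - t)²) / 2 = v² + t²`. Writing `|x| ^ p = (x²) ^ (p / 2)`,
concavity of `x ↦ x ^ (p / 2)` bounds the left-hand side by `(v² + t²) ^ (p / 2)`, and
subadditivity of the same power (as `p / 2 ≤ 1`) bounds this by `|v| ^ p + |t| ^ p`.
-/

namespace Real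

lemma rpow_div_two_add_rpow_div_two_le {q x y : ℝ} (hq₀ : 0 ≤ q) (hq₁ : q ≤ 1)
    (hx : 0 ≤ x) (hy : 0 ≤ y) :
    x ^ q / 2 + y ^ q / 2 ≤ ((x + y) / 2) ^ q := by
  have h := (concaveOn_rpow hq₀ hq₁).2 hx hy (by norm_num : (0 : ℝ) ≤ 1 / 2)
    (by norm_num : (0 : ℝ) ≤ 1 / 2) (by norm_num)
  simp only [smul_eq_mul] at h
  rw [show (x + y) / 2 = 1 / 2 * x + 1 / 2 * y by ring]
  linarith

lemma sq_rpow_div_two (x p : ℝ) : (x ^ 2) ^ (p / 2) = |x| ^ p := by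
  rw [← sq_abs, ← rpow_natCast, ← rpow_mul (abs_nonneg x)]
  congr 1
  push_cast
  ring

end Real

theorem stmt_0 (v t p : ℝ) (hp1 : 1 ≤ p) (hp2 : p ≤ 2) :
    |v + t| ^ p / 2 + |v - t| ^ p / 2 ≤ |v| ^ p + |t| ^ p := by
  have hq₀ : 0 ≤ p / 2 := by linarith
  have hq₁ : p / 2 ≤ 1 := by linarith
  calc |v + t| ^ p / 2 + |v - t| ^ p / 2
      = ((v + t) ^ 2) ^ (p / 2) / 2 + ((v - t) ^ 2) ^ (p / 2) / 2 := by
        rw [Real.sq_rpow_div_two, Real.sq_rpow_div_two]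
    _ ≤ (((v + t) ^ 2 + (v - t) ^ 2) / 2) ^ (p / 2) :=
        Real.rpow_div_two_add_rpow_div_two_le hq₀ hq₁ (sq_nonneg _) (sq_nonneg _)
    _ = (v ^ 2 + t ^ 2) ^ (p / 2) := by ring_nf
    _ ≤ (v ^ 2) ^ (p / 2) + (t ^ 2) ^ (p / 2) :=
        Real.rpow_add_le_add_rpow (sq_nonneg _) (sq_nonneg _) hq₀ hq₁
    _ = |v| ^ p + |t| ^ p := by rw [Real.sq_rpow_div_two, Real.sq_rpow_div_two]
end

section
/- For any lattice $\mathcal{L} \subset \mathbb{R}^m$, any $1 \le p \le 2$, and any $\vec{t} \in \mathbb{R}^m$, the shifted supergaussian mass satisfies $f_p(\vec{t}) \cdot f_p(\mathcal{L}) \le f_p(\mathcal{L} + \vec{t})$, where $f_p(\vec{x}) := \exp(-\|\vec{x}\|_p^p)$ and $f_p(A) := \sum_{\vec{x} \in A} f_p(\vec{x})$ for a discrete set $A$. -/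
/-!
Clarkson's inequality `|a + b|ᵖ + |a - b|ᵖ ≤ 2 (|a|ᵖ + |b|ᵖ)` for `p ≤ 2`, summed over coordinates
and combined with convexity of `exp`, gives `f(t) f(v) ≤ (f(v + t) + f(v - t)) / 2` for every
vector `v`. Summing over the lattice, which is invariant under `v ↦ -v`, turns the two terms on the
right into two copies of `f(L + t)`.
-/

open Real

lemma abs_sq_rpow_half (p x : ℝ) : |x| ^ p = (x ^ 2) ^ (p / 2) := by
  rw [← sq_abs x, ← rpow_two, ← rpow_mul (abs_nonneg x)]
  ring_nf

lemma abs_add_rpow_add_abs_sub_rpow_le {p : ℝ} (hp₀ : 0 ≤ p) (hp₂ : p ≤ 2) (a b : ℝ) :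
    |a + b| ^ p + |a - b| ^ p ≤ 2 * (|a| ^ p + |b| ^ p) := by
  simp only [abs_sq_rpow_half p]
  have hq₀ : 0 ≤ p / 2 := by linarith
  have hq₁ : p / 2 ≤ 1 := by linarith
  -- concavity of `x ↦ x ^ (p / 2)` at the midpoint of `(a + b)²` and `(a - b)²`, which is `a² + b²`
  have hmid := (concaveOn_rpow hq₀ hq₁).2 (sq_nonneg (a + b)) (sq_nonneg (a - b))
    (by norm_num : (0 : ℝ) ≤ 1 / 2) (by norm_num : (0 : ℝ) ≤ 1 / 2) (by norm_num)
  have hsub := rpow_add_le_add_rpow (sq_nonneg a) (sq_nonneg b) hq₀ hq₁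
  simp only [smul_eq_mul] at hmid
  rw [show 1 / 2 * (a + b) ^ 2 + 1 / 2 * (a - b) ^ 2 = a ^ 2 + b ^ 2 by ring] at hmid
  linarith

noncomputable def supergaussian {ι : Type*} [Fintype ι] (p : ℝ) (v : ι → ℝ) : ℝ :=
  exp (-∑ i, |v i| ^ p)

section Supergaussian

variable {ι : Type*} [Fintype ι] {p : ℝ}

lemma supergaussian_neg (p : ℝ) (v : ι → ℝ) : supergaussian p (-v) = supergaussian p v := by
  simp only [supergaussian, Pi.neg_apply, abs_neg]

lemma sum_abs_add_rpow_add_sum_abs_sub_rpow_le (hp₀ : 0 ≤ p) (hp₂ : p ≤ 2) (v t : ι → ℝ) :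
    ∑ i, |v i + t i| ^ p + ∑ i, |v i - t i| ^ p ≤ 2 * (∑ i, |v i| ^ p + ∑ i, |t i| ^ p) := by
  rw [← Finset.sum_add_distrib, ← Finset.sum_add_distrib, Finset.mul_sum]
  exact Finset.sum_le_sum fun i _ => abs_add_rpow_add_abs_sub_rpow_le hp₀ hp₂ (v i) (t i)

lemma supergaussian_mul_le_average (hp₀ : 0 ≤ p) (hp₂ : p ≤ 2) (t v : ι → ℝ) :
    supergaussian p t * supergaussian p v ≤
      (supergaussian p (v + t) + supergaussian p (v - t)) / 2 := by
  have hclarkson := sum_abs_add_rpow_add_sum_abs_sub_rpow_le hp₀ hp₂ v t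
  have hconvex := convexOn_exp.2 (Set.mem_univ (-∑ i, |v i + t i| ^ p))
    (Set.mem_univ (-∑ i, |v i - t i| ^ p))
    (by norm_num : (0 : ℝ) ≤ 1 / 2) (by norm_num : (0 : ℝ) ≤ 1 / 2) (by norm_num)
  simp only [smul_eq_mul] at hconvex
  simp only [supergaussian, Pi.add_apply, Pi.sub_apply, ← exp_add]
  calc exp (-∑ i, |t i| ^ p + -∑ i, |v i| ^ p)
      ≤ exp (1 / 2 * -∑ i, |v i + t i| ^ p + 1 / 2 * -∑ i, |v i - t i| ^ p) :=
        exp_le_exp.2 (by linarith)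
    _ ≤ _ := by linarith

end Supergaussian

lemma tsum_le_tsum_of_le_average_comp_equiv {α : Type*} (e : α ≃ α) {f g : α → ℝ}
    (hf : ∀ x, 0 ≤ f x) (hg : Summable g) (hfg : ∀ x, f x ≤ (g x + g (e x)) / 2) :
    ∑' x, f x ≤ ∑' x, g x := by
  have hge : Summable fun x => g (e x) := e.summable_iff.2 hg
  have havg : Summable fun x => (g x + g (e x)) / 2 := (hg.add hge).div_const 2
  calc ∑' x, f x ≤ ∑' x, (g x + g (e x)) / 2 :=
        (havg.of_nonneg_of_le hf hfg).tsum_le_tsum hfg havg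
    _ = ∑' x, g x := by
        rw [tsum_div_const, hg.tsum_add hge, e.tsum_eq g]
        ring

lemma supergaussian_mul_tsum_le_tsum_add {ι : Type*} [Fintype ι] {p : ℝ} (hp₀ : 0 ≤ p)
    (hp₂ : p ≤ 2) {L : Set (ι → ℝ)} (hL : ∀ v, -v ∈ L ↔ v ∈ L) (t : ι → ℝ)
    (hsum : Summable fun x : L => supergaussian p ((x : ι → ℝ) + t)) :
    supergaussian p t * ∑' x : L, supergaussian p (x : ι → ℝ) ≤
      ∑' x : L, supergaussian p ((x : ι → ℝ) + t) := by
  rw [← tsum_mul_left]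
  refine tsum_le_tsum_of_le_average_comp_equiv ((Equiv.neg _).subtypeEquiv fun v => (hL v).symm)
    (fun x => by unfold supergaussian; positivity) hsum fun x => ?_
  have hneg : supergaussian p (-(x : ι → ℝ) + t) = supergaussian p ((x : ι → ℝ) - t) := by
    rw [neg_add_eq_sub, ← neg_sub, supergaussian_neg]
  change _ ≤ (_ + supergaussian p (-(x : ι → ℝ) + t)) / 2
  rw [hneg]
  exact supergaussian_mul_le_average hp₀ hp₂ t x

theorem stmt_1_general (m k : ℕ) (p : ℝ) (hp1 : 1 ≤ p) (hp2 : p ≤ 2)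
    (b : Fin k → (Fin m → ℝ))
    (L : Set (Fin m → ℝ)) (hL : L = {v | ∃ z : Fin k → ℤ, v = ∑ i, z i • b i})
    (t : Fin m → ℝ)
    (hsum' : Summable (fun x : L => Real.exp (-(∑ i, |((x : Fin m → ℝ) + t) i| ^ p)))) :
    Real.exp (-(∑ i, |t i| ^ p)) * (∑' x : L, Real.exp (-(∑ i, |(x : Fin m → ℝ) i| ^ p)))
      ≤ ∑' x : L, Real.exp (-(∑ i, |((x : Fin m → ℝ) + t) i| ^ p)) := by
  have hLneg : ∀ v, -v ∈ L ↔ v ∈ L := by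
    suffices ∀ v ∈ L, -v ∈ L from fun v => ⟨fun h => neg_neg v ▸ this _ h, this v⟩
    rintro v hv
    rw [hL] at hv ⊢
    obtain ⟨z, rfl⟩ := hv
    exact ⟨-z, by simp [neg_smul]⟩
  exact supergaussian_mul_tsum_le_tsum_add (by linarith) hp2 hLneg t hsum'

theorem stmt_1 (m k : ℕ) (p : ℝ) (hp1 : 1 ≤ p) (hp2 : p ≤ 2)
    (b : Fin k → (Fin m → ℝ)) (hb : LinearIndependent ℝ b)
    (L : Set (Fin m → ℝ)) (hL : L = {v | ∃ z : Fin k → ℤ, v = ∑ i, z i • b i})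
    (t : Fin m → ℝ)
    (hsum : Summable (fun x : L => Real.exp (-(∑ i, |(x : Fin m → ℝ) i| ^ p))))
    (hsum' : Summable (fun x : L => Real.exp (-(∑ i, |((x : Fin m → ℝ) + t) i| ^ p)))) :
    Real.exp (-(∑ i, |t i| ^ p)) * (∑' x : L, Real.exp (-(∑ i, |(x : Fin m → ℝ) i| ^ p)))
      ≤ ∑' x : L, Real.exp (-(∑ i, |((x : Fin m → ℝ) + t) i| ^ p)) :=
  stmt_1_general m k p hp1 hp2 b L hL t hsum'
end

section
/- For any lattice $\mathcal{L} \subset \mathbb{R}^n$ with $n \ge 2$ and any nonzero $\vec{x} \in \mathcal{L}$, letting $\pi$ be the orthogonal projection onto the hyperplane orthogonal to $\vec{x}$, every nonzero vector of the projected lattice $\pi(\mathcal{L})$ has Euclidean norm at least $\frac{3}{4} \cdot \frac{\lambda_1^{(2)}(\mathcal{L})^2}{\|\vec{x}\|_2}$, i.e., $\lambda_1^{(2)}(\pi(\mathcal{L})) \ge \frac{3}{4} \cdot \frac{\lambda_1^{(2)}(\mathcal{L})^2}{\|\vec{x}\|_2}$. -/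
/-!
The vectors `x` and `y` span a rank-2 sublattice of `L` whose Gram determinant is
`‖x‖² ‖π y‖²`. Hermite's bound in rank 2 yields a nonzero vector `w` of this sublattice with
`‖w‖⁴ ≤ 4/3 · ‖x‖² ‖π y‖²`: a shortest vector `w₁` is primitive, so it extends to a basis
`(w₁, w₂)` of the sublattice, and after subtracting a multiple of `w₁` from `w₂` we have
`|⟪w₁, w₂⟫| ≤ ‖w₁‖² / 2` and `‖w₁‖ ≤ ‖w₂‖`, whence the Gram determinant is at least `3/4 · ‖w₁‖⁴`.
Since `λ₁(L) ≤ ‖w‖`, we get `λ₁(L)⁴ ≤ 4/3 · (‖x‖ ‖π y‖)²`, which implies `3/4 · λ₁(L)² ≤ ‖x‖ ‖π y‖`.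
-/

open Filter RealInnerProductSpace

section Gram

variable {E : Type*} [NormedAddCommGroup E] [InnerProductSpace ℝ E]

def gramDet (u v : E) : ℝ := ‖u‖ ^ 2 * ‖v‖ ^ 2 - ⟪u, v⟫ ^ 2

lemma gramDet_le (u v : E) : gramDet u v ≤ ‖u‖ ^ 2 * ‖v‖ ^ 2 :=
  sub_le_self _ (sq_nonneg _)

lemma gramDet_smul_add_smul (u v : E) (a b c d : ℝ) :
    gramDet (a • u + b • v) (c • u + d • v) = (a * d - b * c) ^ 2 * gramDet u v := by
  simp only [gramDet, ← real_inner_self_eq_norm_sq, inner_add_left, inner_add_right,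
    real_inner_smul_left, real_inner_smul_right, real_inner_comm u v]
  ring

lemma gramDet_sub_smul_right (u v : E) (c : ℝ) : gramDet u (v - c • u) = gramDet u v := by
  simpa [neg_add_eq_sub] using gramDet_smul_add_smul u v 1 0 (-c) 1

lemma gramDet_eq_sq_norm_mul_sq_norm_starProjection (x y : E) :
    gramDet x y = ‖x‖ ^ 2 * ‖(ℝ ∙ x)ᗮ.starProjection y‖ ^ 2 := by
  have hperp : ⟪x, (ℝ ∙ x)ᗮ.starProjection y⟫ = 0 :=
    Submodule.mem_orthogonal_singleton_iff_inner_right.1 ((ℝ ∙ x)ᗮ.starProjection_apply_mem y)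
  rw [← sub_zero (_ * _), ← zero_pow two_ne_zero, ← hperp, ← gramDet,
    Submodule.starProjection_orthogonal_val, Submodule.starProjection_singleton,
    gramDet_sub_smul_right]

def intComb (u v : E) (z : ℤ × ℤ) : E := (z.1 : ℝ) • u + (z.2 : ℝ) • v

lemma gramDet_intComb (u v : E) (z z' : ℤ × ℤ) :
    gramDet (intComb u v z) (intComb u v z') =
      ((z.1 * z'.2 - z.2 * z'.1 : ℤ) : ℝ) ^ 2 * gramDet u v := by
  rw [intComb, intComb, gramDet_smul_add_smul]; push_cast; ring

lemma sq_fst_mul_gramDet_le (u v : E) (z : ℤ × ℤ) :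
    (z.1 : ℝ) ^ 2 * gramDet u v ≤ ‖intComb u v z‖ ^ 2 * ‖v‖ ^ 2 := by
  have h := gramDet_intComb u v z (0, 1)
  simp only [intComb, Int.cast_zero, Int.cast_one, zero_smul, one_smul, zero_add] at h
  simpa [intComb, h] using gramDet_le (intComb u v z) v

lemma sq_snd_mul_gramDet_le (u v : E) (z : ℤ × ℤ) :
    (z.2 : ℝ) ^ 2 * gramDet u v ≤ ‖u‖ ^ 2 * ‖intComb u v z‖ ^ 2 := by
  have h := gramDet_intComb u v (1, 0) z
  simp only [intComb, Int.cast_zero, Int.cast_one, zero_smul, one_smul, add_zero] at h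
  simpa [intComb, h] using gramDet_le u (intComb u v z)

variable {u v : E}

lemma intComb_ne_zero (hG : 0 < gramDet u v) {z : ℤ × ℤ} (hz : z ≠ 0) : intComb u v z ≠ 0 := by
  intro h
  have h₁ := sq_fst_mul_gramDet_le u v z
  have h₂ := sq_snd_mul_gramDet_le u v z
  simp only [h, norm_zero, ne_eq, OfNat.ofNat_ne_zero, not_false_eq_true, zero_pow, zero_mul,
    mul_zero] at h₁ h₂
  have : (z.1 : ℝ) ^ 2 = 0 ∧ (z.2 : ℝ) ^ 2 = 0 := by
    constructor <;> nlinarith [sq_nonneg (z.1 : ℝ), sq_nonneg (z.2 : ℝ)]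
  exact hz (Prod.ext (by simpa using this.1) (by simpa using this.2))

lemma tendsto_sq_norm_intComb_cofinite (hG : 0 < gramDet u v) :
    Tendsto (fun z ↦ ‖intComb u v z‖ ^ 2) cofinite atTop := by
  have hsum : 0 < ‖u‖ ^ 2 + ‖v‖ ^ 2 := by nlinarith [gramDet_le u v, sq_nonneg ‖u‖, sq_nonneg ‖v‖]
  have hbound (z : ℤ × ℤ) :
      ‖z‖ ^ 2 * gramDet u v ≤ (‖u‖ ^ 2 + ‖v‖ ^ 2) * ‖intComb u v z‖ ^ 2 := by
    have hz : ‖z‖ ^ 2 ≤ (z.1 : ℝ) ^ 2 + (z.2 : ℝ) ^ 2 := by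
      rw [Prod.norm_def, Int.norm_eq_abs, Int.norm_eq_abs]
      rcases max_cases |(z.1 : ℝ)| |(z.2 : ℝ)| with ⟨h, -⟩ | ⟨h, -⟩ <;>
        rw [h, sq_abs] <;> nlinarith [sq_nonneg (z.1 : ℝ), sq_nonneg (z.2 : ℝ)]
    nlinarith [sq_fst_mul_gramDet_le u v z, sq_snd_mul_gramDet_le u v z]
  have hz : Tendsto (fun z : ℤ × ℤ ↦ ‖z‖ ^ 2 * gramDet u v) cofinite atTop := by
    rw [← cocompact_eq_cofinite]
    exact ((tendsto_pow_atTop two_ne_zero).comp tendsto_norm_cocompact_atTop).atTop_mul_const hG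
  exact (tendsto_const_mul_atTop_of_pos hsum).1 (tendsto_atTop_mono hbound hz)

lemma exists_norm_intComb_min (hG : 0 < gramDet u v) :
    ∃ z₀ ≠ 0, ∀ z ≠ 0, ‖intComb u v z₀‖ ≤ ‖intComb u v z‖ := by
  obtain ⟨z₀, hz₀, hmin⟩ := (tendsto_sq_norm_intComb_cofinite hG).exists_within_forall_le
    (s := {z | z ≠ 0}) ⟨(1, 0), by simp⟩
  exact ⟨z₀, hz₀, fun z hz ↦ (pow_le_pow_iff_left₀ (norm_nonneg _) (norm_nonneg _)
    two_ne_zero).1 (hmin z hz)⟩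

lemma isCoprime_of_norm_intComb_min (hG : 0 < gramDet u v) {z₀ : ℤ × ℤ} (hz₀ : z₀ ≠ 0)
    (hmin : ∀ z ≠ 0, ‖intComb u v z₀‖ ≤ ‖intComb u v z‖) : IsCoprime z₀.1 z₀.2 := by
  rw [Int.isCoprime_iff_gcd_eq_one]
  obtain ⟨m, hm⟩ := Int.gcd_dvd_left z₀.1 z₀.2
  obtain ⟨k, hk⟩ := Int.gcd_dvd_right z₀.1 z₀.2
  have hz : ((m, k) : ℤ × ℤ) ≠ 0 := by
    rintro h
    simp only [Prod.mk_eq_zero] at h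
    exact hz₀ (Prod.ext (by rw [hm, h.1, mul_zero]; rfl) (by rw [hk, h.2, mul_zero]; rfl))
  have hg : 0 < Int.gcd z₀.1 z₀.2 := Int.gcd_pos_iff.2 (by
    by_contra! h; exact hz₀ (Prod.ext h.1 h.2))
  have hscale : intComb u v z₀ = (Int.gcd z₀.1 z₀.2 : ℝ) • intComb u v (m, k) := by
    have hm' : (z₀.1 : ℝ) = Int.gcd z₀.1 z₀.2 * m := by exact_mod_cast hm
    have hk' : (z₀.2 : ℝ) = Int.gcd z₀.1 z₀.2 * k := by exact_mod_cast hk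
    rw [intComb, intComb, hm', hk']; module
  have hpos := norm_pos_iff.2 (intComb_ne_zero hG hz)
  have hle := hmin _ hz
  rw [hscale, norm_smul, Real.norm_natCast] at hle
  have : (Int.gcd z₀.1 z₀.2 : ℝ) ≤ 1 := by nlinarith
  exact le_antisymm (by exact_mod_cast this) hg

lemma exists_abs_inner_sub_intCast_smul_le (u w : E) :
    ∃ s : ℤ, |⟪u, w - (s : ℝ) • u⟫| ≤ ‖u‖ ^ 2 / 2 := by
  rcases eq_or_ne u 0 with rfl | hu
  · exact ⟨0, by simp⟩
  have hu2 : 0 < ‖u‖ ^ 2 := by positivity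
  set r := ⟪u, w⟫ / ‖u‖ ^ 2
  refine ⟨round r, ?_⟩
  have : ⟪u, w - (round r : ℝ) • u⟫ = ‖u‖ ^ 2 * (r - round r) := by
    have hr : ‖u‖ ^ 2 * r = ⟪u, w⟫ := mul_div_cancel₀ _ hu2.ne'
    rw [inner_sub_right, real_inner_smul_right, real_inner_self_eq_norm_sq]
    linear_combination -hr
  rw [this, abs_mul, abs_of_pos hu2]
  nlinarith [abs_sub_round r]

lemma three_div_four_mul_norm_pow_four_le_gramDet {w : E} (hnorm : ‖u‖ ≤ ‖w‖)
    (hinner : |⟪u, w⟫| ≤ ‖u‖ ^ 2 / 2) : 3 / 4 * ‖u‖ ^ 4 ≤ gramDet u w := by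
  have h₁ : ‖u‖ ^ 2 ≤ ‖w‖ ^ 2 := by gcongr
  have h₂ : ⟪u, w⟫ ^ 2 ≤ (‖u‖ ^ 2 / 2) ^ 2 := by
    rw [← sq_abs]; gcongr
  rw [gramDet]
  nlinarith [sq_nonneg ‖u‖]

theorem exists_intComb_ne_zero_norm_pow_four_le (hG : 0 < gramDet u v) :
    ∃ z, intComb u v z ≠ 0 ∧ ‖intComb u v z‖ ^ 4 ≤ 4 / 3 * gramDet u v := by
  obtain ⟨z₀, hz₀, hmin⟩ := exists_norm_intComb_min hG
  obtain ⟨a, b, hab⟩ := isCoprime_of_norm_intComb_min hG hz₀ hmin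
  -- `a z₀.1 + b z₀.2 = 1`, so `(-b, a)` completes `z₀` to a basis of `ℤ × ℤ`; reduce it by `z₀`.
  obtain ⟨s, hs⟩ := exists_abs_inner_sub_intCast_smul_le (intComb u v z₀) (intComb u v (-b, a))
  set z₁ : ℤ × ℤ := (-b - s * z₀.1, a - s * z₀.2)
  have hz₁ : intComb u v z₁ = intComb u v (-b, a) - (s : ℝ) • intComb u v z₀ := by
    simp only [intComb, z₁]; push_cast; module
  have hdet : z₀.1 * z₁.2 - z₀.2 * z₁.1 = 1 := by simp only [z₁]; linear_combination hab
  have hz₁0 : z₁ ≠ 0 := by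
    rintro h; simp [h] at hdet
  have hgram : gramDet (intComb u v z₀) (intComb u v z₁) = gramDet u v := by
    rw [gramDet_intComb, hdet]; simp
  refine ⟨z₀, intComb_ne_zero hG hz₀, ?_⟩
  have := three_div_four_mul_norm_pow_four_le_gramDet (hmin z₁ hz₁0) (hz₁ ▸ hs)
  linarith

end Gram

theorem stmt_2_general (n : ℕ)
    (b : Fin n → EuclideanSpace ℝ (Fin n))
    (L : Set (EuclideanSpace ℝ (Fin n)))
    (hL : L = {v | ∃ z : Fin n → ℤ, v = ∑ i, z i • b i})
    (x : EuclideanSpace ℝ (Fin n)) (hx : x ∈ L) (hx0 : x ≠ 0)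
    (lam : ℝ) (hlam : lam = sInf ((fun v => ‖v‖) '' {v | v ∈ L ∧ v ≠ 0}))
    (y : EuclideanSpace ℝ (Fin n)) (hy : y ∈ L)
    (hpy : Submodule.orthogonalProjection ((Submodule.span ℝ {x})ᗮ) y ≠ 0) :
    3 / 4 * lam ^ 2 / ‖x‖ ≤
      ‖(Submodule.orthogonalProjection ((Submodule.span ℝ {x})ᗮ) y : EuclideanSpace ℝ (Fin n))‖ := by
  set p := (ℝ ∙ x)ᗮ.starProjection y
  have hL : L = Submodule.span ℤ (Set.range b) := by
    ext v; simp [hL, Submodule.mem_span_range_iff_exists_fun, eq_comm]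
  have hgram : gramDet x y = ‖x‖ ^ 2 * ‖p‖ ^ 2 := gramDet_eq_sq_norm_mul_sq_norm_starProjection x y
  have hp : 0 < ‖p‖ := norm_pos_iff.2 fun h ↦ hpy (Subtype.ext h)
  have hxpos : 0 < ‖x‖ := norm_pos_iff.2 hx0
  obtain ⟨z, hz0, hz⟩ := exists_intComb_ne_zero_norm_pow_four_le (u := x) (v := y)
    (by rw [hgram]; positivity)
  have hzL : intComb x y z ∈ L := by
    rw [hL] at hx hy ⊢
    simp only [intComb, Int.cast_smul_eq_zsmul]
    exact add_mem (zsmul_mem hx _) (zsmul_mem hy _)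
  have hlam0 : 0 ≤ lam := hlam ▸ Real.sInf_nonneg (by rintro _ ⟨v, -, rfl⟩; exact norm_nonneg v)
  have hlamz : lam ≤ ‖intComb x y z‖ :=
    hlam ▸ csInf_le ⟨0, by rintro _ ⟨v, -, rfl⟩; exact norm_nonneg v⟩ ⟨_, ⟨hzL, hz0⟩, rfl⟩
  have hlam4 : lam ^ 4 ≤ 4 / 3 * (‖x‖ * ‖p‖) ^ 2 := by
    rw [mul_pow, ← hgram]; exact (pow_le_pow_left₀ hlam0 hlamz 4).trans hz
  rw [div_le_iff₀ hxpos]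
  change _ ≤ ‖p‖ * ‖x‖
  nlinarith [mul_pos hxpos hp, sq_nonneg lam]

theorem stmt_2 (n : ℕ) (hn : 2 ≤ n)
    (b : Fin n → EuclideanSpace ℝ (Fin n)) (hb : LinearIndependent ℝ b)
    (L : Set (EuclideanSpace ℝ (Fin n)))
    (hL : L = {v | ∃ z : Fin n → ℤ, v = ∑ i, z i • b i})
    (x : EuclideanSpace ℝ (Fin n)) (hx : x ∈ L) (hx0 : x ≠ 0)
    (lam : ℝ) (hlam : lam = sInf ((fun v => ‖v‖) '' {v | v ∈ L ∧ v ≠ 0}))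
    (y : EuclideanSpace ℝ (Fin n)) (hy : y ∈ L)
    (hpy : Submodule.orthogonalProjection ((Submodule.span ℝ {x})ᗮ) y ≠ 0) :
    3 / 4 * lam ^ 2 / ‖x‖ ≤
      ‖(Submodule.orthogonalProjection ((Submodule.span ℝ {x})ᗮ) y : EuclideanSpace ℝ (Fin n))‖ :=
  stmt_2_general n b L hL x hx hx0 lam hlam y hy hpy
end

section
/- For any lattice $\mathcal{L} \subset \mathbb{R}^m$, any real $c \ge 2$, radius $r > 0$, and symmetric convex body $\mathcal{K} \subset \mathbb{R}^m$, there exists $c^\dagger$ with $c/2 < c^\dagger \le c$ such that $\frac{|\mathcal{L} \cap c^\dagger r \mathcal{K}|}{|\mathcal{L} \cap (c^\dagger - 1) r \mathcal{K}|} \le 2^{\varepsilon m}$, where $\varepsilon = \frac{\log 5}{\lfloor c/2 \rfloor}$ (logarithm base 2). -/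
open scoped Pointwise

open Set MeasureTheory Module Finset

/-!
Put `n = ⌊c / 2⌋` and `N i = |L ∩ (c - n + i) r K|`. A maximal subset of `L ∩ R K` whose
differences avoid `a K` has `L ∩ R K` inside its sum with `L ∩ a K`, and the translates of
`(a / 2) K` centred at its points are disjoint and lie in `(R + a / 2) K`; comparing volumes gives
`|L ∩ R K| ≤ (1 + 2R / a)^m |L ∩ a K|`, hence `N n ≤ 5^m N 0` because `c ≤ 2 (c - n)`.
Since `(2^(εm))^n = 5^m`, the `n` ratios `N (i + 1) / N i` cannot all exceed `2^(εm)`.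
-/

theorem Finset.exists_subset_pairwise_not_rel_forall_exists_rel {α : Type*} [DecidableEq α]
    (r : α → α → Prop) (hrefl : ∀ x, r x x) (hsymm : ∀ x y, r x y → r y x) (S : Finset α) :
    ∃ M ⊆ S, (M : Set α).Pairwise (fun x y => ¬ r x y) ∧ ∀ x ∈ S, ∃ y ∈ M, r x y := by
  induction S using Finset.induction_on with
  | empty => exact ⟨∅, subset_rfl, by simp, by simp⟩
  | insert x S _ ih =>
    obtain ⟨M, hMS, hMsep, hcover⟩ := ih
    by_cases hx : ∃ y ∈ M, r x y
    · refine ⟨M, hMS.trans (subset_insert x S), hMsep, ?_⟩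
      simpa only [mem_insert, forall_eq_or_imp] using ⟨hx, hcover⟩
    · push Not at hx
      refine ⟨insert x M, insert_subset_insert x hMS, ?_, ?_⟩
      · rw [coe_insert, Set.pairwise_insert]
        exact ⟨hMsep, fun y hy _ => ⟨hx y hy, fun h => hx y hy (hsymm y x h)⟩⟩
      · simp only [mem_insert, forall_eq_or_imp, exists_eq_or_imp]
        exact ⟨Or.inl (hrefl x), fun z hz => Or.inr (hcover z hz)⟩

theorem exists_lt_le_mul_of_le_pow_mul {N : ℕ → ℝ} {q : ℝ} {n : ℕ} (hq : 0 ≤ q) (hn : n ≠ 0)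
    (h : N n ≤ q ^ n * N 0) : ∃ i < n, N (i + 1) ≤ q * N i := by
  by_contra! hlt
  have hgrowth : ∀ j < n, q ^ (j + 1) * N 0 < N (j + 1) := by
    intro j hj
    induction j with
    | zero => simpa using hlt 0 hj
    | succ j ih =>
      calc q ^ (j + 1 + 1) * N 0 = q * (q ^ (j + 1) * N 0) := by ring
        _ ≤ q * N (j + 1) := mul_le_mul_of_nonneg_left (ih (by omega)).le hq
        _ < N (j + 1 + 1) := hlt _ hj
  obtain ⟨k, rfl⟩ := Nat.exists_eq_succ_of_ne_zero hn
  exact (hgrowth k k.lt_succ_self).not_ge h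

section ConvexBody

variable {E : Type*} [NormedAddCommGroup E] [NormedSpace ℝ E] {K : Set E}

theorem Balanced.pairwiseDisjoint_vadd_half_smul (hKbal : Balanced ℝ K) (hKconv : Convex ℝ K)
    {a : ℝ} (ha : 0 ≤ a) {M : Set E} (hMsep : M.Pairwise fun x y => x - y ∉ a • K) :
    M.PairwiseDisjoint fun y => y +ᵥ (a / 2) • K := by
  intro y₁ hy₁ y₂ hy₂ hne
  refine Set.disjoint_left.mpr ?_
  rintro _ ⟨k₁, hk₁, rfl⟩ ⟨k₂, hk₂, hk⟩
  apply hMsep hy₁ hy₂ hne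
  have hhalf : (a / 2) • K + (a / 2) • K = a • K := by
    rw [← hKconv.add_smul (by positivity) (by positivity), add_halves]
  rw [← hhalf]
  refine ⟨k₂, hk₂, -k₁, ((hKbal.smul _).neg_mem_iff).2 hk₁, ?_⟩
  simp only [vadd_eq_add] at hk
  change k₂ + -k₁ = y₁ - y₂
  rw [← sub_eq_add_neg, sub_eq_sub_iff_add_eq_add, add_comm k₂, hk]

variable [MeasurableSpace E] [BorelSpace E] [FiniteDimensional ℝ E]

theorem Balanced.card_le_of_pairwise_sub_notMem (hKbal : Balanced ℝ K) (hKconv : Convex ℝ K)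
    (hKcpt : IsCompact K) (hKint : (interior K).Nonempty) {a R : ℝ} (ha : 0 < a) (hR : 0 ≤ R)
    {M : Finset E} (hMK : (M : Set E) ⊆ R • K)
    (hMsep : (M : Set E).Pairwise fun x y => x - y ∉ a • K) :
    (#M : ℝ) ≤ (1 + 2 * R / a) ^ finrank ℝ E := by
  set μ : Measure E := Measure.addHaar
  set A := (a / 2) • K
  have hA_pos : μ A ≠ 0 := by
    refine (μ.measure_pos_of_nonempty_interior ?_).ne'
    rw [interior_smul₀ (by positivity)]
    exact hKint.smul_set
  have hA_top : μ A ≠ ⊤ := (hKcpt.smul _).measure_lt_top.ne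
  have hunion : (⋃ y ∈ M, y +ᵥ A) ⊆ (1 + 2 * R / a) • A := by
    have hscale : (1 + 2 * R / a) • A = R • K + A := by
      rw [smul_smul, ← hKconv.add_smul hR (by positivity)]
      congr 1
      field_simp
      ring
    rw [hscale]
    simp only [Set.iUnion_subset_iff]
    rintro y hy _ ⟨k, hk, rfl⟩
    exact Set.add_mem_add (hMK hy) hk
  have hvol : (#M : ENNReal) * μ A ≤ ENNReal.ofReal ((1 + 2 * R / a) ^ finrank ℝ E) * μ A := by
    calc (#M : ENNReal) * μ A = μ (⋃ y ∈ M, y +ᵥ A) := by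
          rw [measure_biUnion_finset (hKbal.pairwiseDisjoint_vadd_half_smul hKconv ha.le hMsep)
            fun y _ => ((hKcpt.smul _).isClosed.measurableSet).const_vadd y]
          simp [measure_vadd, A]
      _ ≤ μ ((1 + 2 * R / a) • A) := measure_mono hunion
      _ = _ := Measure.addHaar_smul_of_nonneg μ (by positivity) A
  have hcard := (ENNReal.mul_le_mul_iff_left hA_pos hA_top).mp hvol
  rw [← ENNReal.ofReal_natCast] at hcard
  exact (ENNReal.ofReal_le_ofReal_iff (by positivity)).mp hcard

theorem AddSubgroup.ncard_inter_smul_le (L : AddSubgroup E) [DiscreteTopology L]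
    (hKbal : Balanced ℝ K) (hKconv : Convex ℝ K) (hKcpt : IsCompact K)
    (hKint : (interior K).Nonempty) {a R : ℝ} (ha : 0 < a) (hR : 0 ≤ R) :
    ((L ∩ R • K : Set E).ncard : ℝ) ≤
      (1 + 2 * R / a) ^ finrank ℝ E * ((L ∩ a • K : Set E).ncard : ℝ) := by
  classical
  have hfin (s : ℝ) : (L ∩ s • K : Set E).Finite := by
    rw [Set.inter_comm]
    exact Metric.finite_isBounded_inter_isClosed DiscreteTopology.isDiscrete
      (hKcpt.smul s).isBounded L.isClosed_of_discrete
  have h0K : (0 : E) ∈ a • K := (hKbal.smul a).zero_mem (hKint.mono interior_subset).smul_set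
  set S := (hfin R).toFinset
  set T := (hfin a).toFinset
  obtain ⟨M, hMS, hMsep, hcover⟩ := S.exists_subset_pairwise_not_rel_forall_exists_rel
    (fun x y => x - y ∈ a • K) (fun x => by simpa using h0K)
    (fun x y h => by simpa using ((hKbal.smul a).neg_mem_iff).2 h)
  have hST : S ⊆ M + T := by
    intro x hx
    obtain ⟨y, hy, hxy⟩ := hcover x hx
    have hxL : x ∈ L := ((hfin R).mem_toFinset.mp hx).1
    have hyL : y ∈ L := ((hfin R).mem_toFinset.mp (hMS hy)).1
    exact Finset.mem_add.2 ⟨y, hy, x - y, (hfin a).mem_toFinset.mpr ⟨L.sub_mem hxL hyL, hxy⟩,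
      add_sub_cancel y x⟩
  have hMK : (M : Set E) ⊆ R • K := fun y hy => ((hfin R).mem_toFinset.mp (hMS hy)).2
  rw [Set.ncard_eq_toFinset_card _ (hfin R), Set.ncard_eq_toFinset_card _ (hfin a)]
  calc (#S : ℝ) ≤ #M * #T := by exact_mod_cast (Finset.card_le_card hST).trans card_add_le
    _ ≤ _ := by
      gcongr
      exact hKbal.card_le_of_pairwise_sub_notMem hKconv hKcpt hKint ha hR hMK hMsep

end ConvexBody

theorem stmt_5 (m : ℕ) (c r : ℝ) (hc : 2 ≤ c) (hr : 0 < r)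
    (b : Fin m → (Fin m → ℝ)) (hb : LinearIndependent ℝ b)
    (L : Set (Fin m → ℝ)) (hL : L = {v | ∃ z : Fin m → ℤ, v = ∑ i, z i • b i})
    (K : Set (Fin m → ℝ)) (hKconv : Convex ℝ K) (hKcpt : IsCompact K)
    (hKsymm : K = -K) (hKint : (interior K).Nonempty)
    (ε : ℝ) (hε : ε = Real.logb 2 5 / (⌊c / 2⌋₊ : ℝ)) :
    ∃ cd : ℝ, c / 2 < cd ∧ cd ≤ c ∧
      ((L ∩ (cd * r) • K).ncard : ℝ) ≤
        (2 : ℝ) ^ (ε * m) * ((L ∩ ((cd - 1) * r) • K).ncard : ℝ) := by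
  set n := ⌊c / 2⌋₊
  have hn : 1 ≤ n := Nat.le_floor (by push_cast; linarith)
  have hnc : (n : ℝ) ≤ c / 2 := Nat.floor_le (by linarith)
  let B := basisOfLinearIndependentOfCardEqFinrank' b hb (by simp)
  have hLB : L = (Submodule.span ℤ (range B)).toAddSubgroup := by
    ext v
    simp [hL, B, Submodule.mem_span_range_iff_exists_fun, eq_comm]
  have hKbal : Balanced ℝ K :=
    (balanced_iff_neg_mem hKconv).2 fun x hx => by rwa [hKsymm, Set.neg_mem_neg]
  have hq : ((2 : ℝ) ^ (ε * m)) ^ n = 5 ^ m := by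
    rw [← Real.rpow_natCast _ n, ← Real.rpow_mul zero_le_two, hε,
      show Real.logb 2 5 / n * m * n = Real.logb 2 5 * m by field_simp,
      Real.rpow_mul zero_le_two, Real.rpow_logb two_pos (by norm_num) (by norm_num),
      Real.rpow_natCast]
  have ha : 0 < (c - n) * r := mul_pos (by linarith) hr
  have hratio : 2 * (c * r) / ((c - n) * r) ≤ 4 := by
    rw [div_le_iff₀ ha]
    nlinarith
  set N : ℕ → ℝ := fun i => ((L ∩ ((c - n + i) * r) • K).ncard : ℝ)
  have hcount : N n ≤ ((2 : ℝ) ^ (ε * m)) ^ n * N 0 := by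
    rw [hq]
    calc N n ≤ (1 + 2 * (c * r) / ((c - n) * r)) ^ m * N 0 := by
          simpa [N, hLB] using (Submodule.span ℤ (range B)).toAddSubgroup.ncard_inter_smul_le
            hKbal hKconv hKcpt hKint (a := (c - n) * r) (R := c * r) ha (by positivity)
      _ ≤ 5 ^ m * N 0 := by
          gcongr
          linarith
  obtain ⟨i, hi, hle⟩ := exists_lt_le_mul_of_le_pow_mul (by positivity) (by omega) hcount
  have hi' : (i : ℝ) + 1 ≤ n := by exact_mod_cast hi
  refine ⟨c - n + (i + 1), by linarith [(i.cast_nonneg : (0 : ℝ) ≤ i)], by linarith, ?_⟩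
  rw [add_sub_assoc, add_sub_cancel_right]
  simpa [N] using hle
end

section
/- For any $1 \le p \le q$ (with $q$ possibly $\infty$), $m \ge 1$, and real $\alpha \ge e$, the $\ell_p$ ball $m^{1/p - 1/q}\mathcal{B}_p^m$ can be covered by at most $(e^4 \alpha^p)^{m/\alpha^p}$ translated copies of $\alpha\mathcal{B}_q^m$. -/
/-!
Scale the lattice `ℤᵐ` by `δ = α / m^(1/q)` and round a point `x` of the `ℓ_p` ball towards
zero coordinatewise. Each coordinate moves by at most `δ`, hence `x` moves by at most
`m^(1/q) δ = α` in `ℓ_q`, and the rounded lattice point `z` satisfies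
`‖z‖₁ ≤ ∑ |xᵢ / δ|^p ≤ m / α^p`, since nonzero integers satisfy `|n| ≤ |n|^p`.
So the lattice points of the `ℓ₁` ball of radius `k = ⌊m / β⌋`, `β = α^p`, are enough centres.
Weighting each such `z` by `β^(k - ‖z‖₁) ≥ 1` and summing over the whole box turns the count into
a product of two-sided geometric series: at most `β^k ((β + 1) / (β - 1))^m ≤ (e⁴ β)^(m / β)`.
-/

open scoped ENNReal

noncomputable def lpnorm (q : ℝ≥0∞) {m : ℕ} (x : Fin m → ℝ) : ℝ :=
  if q = ⊤ then ⨆ i, |x i| else (∑ i, |x i| ^ q.toReal) ^ (1 / q.toReal)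

open Finset

noncomputable def roundTowardZero (y : ℝ) : ℤ := if 0 ≤ y then ⌊y⌋ else ⌈y⌉

lemma abs_roundTowardZero_le (y : ℝ) : |(roundTowardZero y : ℝ)| ≤ |y| := by
  unfold roundTowardZero
  split_ifs with hy
  · rw [abs_of_nonneg hy, abs_of_nonneg (by exact_mod_cast Int.floor_nonneg.mpr hy)]
    exact Int.floor_le y
  · have hy : y ≤ 0 := (not_le.mp hy).le
    rw [abs_of_nonpos hy, abs_of_nonpos (by exact_mod_cast Int.ceil_nonpos.mpr hy), neg_le_neg_iff]
    exact Int.le_ceil y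

lemma abs_sub_roundTowardZero_le (y : ℝ) : |y - roundTowardZero y| ≤ 1 := by
  unfold roundTowardZero
  split_ifs with hy
  · rw [abs_of_nonneg (by linarith [Int.floor_le y])]
    linarith [Int.lt_floor_add_one y]
  · rw [abs_of_nonpos (by linarith [Int.le_ceil y])]
    linarith [Int.ceil_lt_add_one y]

lemma natAbs_roundTowardZero_le_rpow {p : ℝ} (hp : 1 ≤ p) (y : ℝ) :
    ((roundTowardZero y).natAbs : ℝ) ≤ |y| ^ p := by
  have hn : ((roundTowardZero y).natAbs : ℝ) = |(roundTowardZero y : ℝ)| := by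
    rw [Nat.cast_natAbs, Int.cast_abs]
  rcases eq_or_ne (roundTowardZero y) 0 with h0 | h0
  · simp [h0, Real.rpow_nonneg]
  have h1 : (1 : ℝ) ≤ |(roundTowardZero y : ℝ)| := by
    exact_mod_cast Int.one_le_abs h0
  calc ((roundTowardZero y).natAbs : ℝ) ≤ |y| := hn ▸ abs_roundTowardZero_le y
    _ = |y| ^ (1 : ℝ) := (Real.rpow_one _).symm
    _ ≤ |y| ^ p := Real.rpow_le_rpow_of_exponent_le (h1.trans (abs_roundTowardZero_le y)) hp

lemma sum_pow_natAbs_le {γ : ℝ} (hγ₀ : 0 ≤ γ) (hγ₁ : γ < 1) (s : Finset ℤ) :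
    ∑ n ∈ s, γ ^ n.natAbs ≤ (1 + γ) / (1 - γ) := by
  have hpos : HasSum (fun n : ℕ => γ ^ ((n : ℤ).natAbs)) (1 - γ)⁻¹ := by
    simpa only [Int.natAbs_natCast] using hasSum_geometric_of_lt_one hγ₀ hγ₁
  have hneg : HasSum (fun n : ℕ => γ ^ (-((n : ℤ) + 1)).natAbs) (γ * (1 - γ)⁻¹) := by
    have h : (fun n : ℕ => γ ^ (-((n : ℤ) + 1)).natAbs) = fun n => γ * γ ^ n :=
      funext fun n => by rw [← pow_succ']; congr 1
    exact h ▸ (hasSum_geometric_of_lt_one hγ₀ hγ₁).mul_left γ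
  have hall : HasSum (fun n : ℤ => γ ^ n.natAbs) ((1 - γ)⁻¹ + γ * (1 - γ)⁻¹) :=
    HasSum.of_nat_of_neg_add_one hpos hneg
  calc ∑ n ∈ s, γ ^ n.natAbs ≤ (1 - γ)⁻¹ + γ * (1 - γ)⁻¹ :=
        sum_le_hasSum s (fun n _ => pow_nonneg hγ₀ _) hall
    _ = (1 + γ) / (1 - γ) := by ring

lemma add_one_div_sub_one_le_exp {β : ℝ} (hβ : 2 ≤ β) :
    (β + 1) / (β - 1) ≤ Real.exp (4 / β) := by
  have h4 : (β + 1) / (β - 1) ≤ 4 / β + 1 := by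
    rw [div_le_iff₀ (by linarith), div_add_one (by positivity), div_mul_eq_mul_div,
      le_div_iff₀ (by positivity)]
    nlinarith
  exact h4.trans (Real.add_one_le_exp _)

section IntL1Ball

variable (ι : Type*) [Fintype ι] [DecidableEq ι]

noncomputable def intL1Ball (k : ℕ) : Finset (ι → ℤ) :=
  {z ∈ Fintype.piFinset fun _ => Icc (-(k : ℤ)) k | ∑ i, (z i).natAbs ≤ k}

variable {ι}

lemma mem_intL1Ball {k : ℕ} {z : ι → ℤ} : z ∈ intL1Ball ι k ↔ ∑ i, (z i).natAbs ≤ k := by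
  refine ⟨fun hz => (mem_filter.1 hz).2, fun hz => mem_filter.2 ⟨?_, hz⟩⟩
  refine Fintype.mem_piFinset.2 fun i => mem_Icc.2 ?_
  have : (z i).natAbs ≤ k := (single_le_sum (fun j _ => Nat.zero_le _) (mem_univ i)).trans hz
  omega

lemma card_intL1Ball_le {β : ℝ} (hβ : 1 < β) (k : ℕ) :
    ((intL1Ball ι k).card : ℝ) ≤ β ^ k * ((β + 1) / (β - 1)) ^ Fintype.card ι := by
  set γ := β⁻¹ with hγ
  have hweight : ∀ z ∈ intL1Ball ι k, (1 : ℝ) ≤ β ^ k * ∏ i, γ ^ (z i).natAbs := by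
    intro z hz
    rw [prod_pow_eq_pow_sum, hγ, inv_pow, ← div_eq_mul_inv, one_le_div (by positivity)]
    exact pow_le_pow_right₀ hβ.le (mem_intL1Ball.1 hz)
  have hgeom : (1 + γ) / (1 - γ) = (β + 1) / (β - 1) := by
    rw [hγ]
    field_simp
  calc ((intL1Ball ι k).card : ℝ) ≤ ∑ z ∈ intL1Ball ι k, β ^ k * ∏ i, γ ^ (z i).natAbs := by
        simpa using sum_le_sum hweight
    _ ≤ ∑ z ∈ Fintype.piFinset fun _ => Icc (-(k : ℤ)) k, β ^ k * ∏ i, γ ^ (z i).natAbs :=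
        sum_le_sum_of_subset_of_nonneg (filter_subset _ _) fun _ _ _ => by positivity
    _ = β ^ k * ∏ _i : ι, ∑ n ∈ Icc (-(k : ℤ)) k, γ ^ n.natAbs := by
        rw [← mul_sum, prod_univ_sum]
    _ ≤ β ^ k * ∏ _i : ι, (β + 1) / (β - 1) := by
        gcongr with i
        exact hgeom ▸ sum_pow_natAbs_le (by positivity) (inv_lt_one_of_one_lt₀ hβ) _
    _ = β ^ k * ((β + 1) / (β - 1)) ^ Fintype.card ι := by
        rw [prod_const, card_univ]

lemma card_intL1Ball_floor_le {β : ℝ} (hβ : 2 ≤ β) :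
    ((intL1Ball ι ⌊Fintype.card ι / β⌋₊).card : ℝ) ≤
      (Real.exp 4 * β) ^ ((Fintype.card ι : ℝ) / β) := by
  set s := (Fintype.card ι : ℝ) / β with hs
  have hs₀ : 0 ≤ s := by positivity
  have hbase : 0 ≤ (β + 1) / (β - 1) := div_nonneg (by linarith) (by linarith)
  have hpow : β ^ ⌊s⌋₊ ≤ β ^ s := by
    rw [← Real.rpow_natCast]
    exact Real.rpow_le_rpow_of_exponent_le (by linarith) (Nat.floor_le hs₀)
  have hexp : ((β + 1) / (β - 1)) ^ Fintype.card ι ≤ Real.exp 4 ^ s := by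
    calc ((β + 1) / (β - 1)) ^ Fintype.card ι ≤ Real.exp (4 / β) ^ Fintype.card ι :=
          pow_le_pow_left₀ hbase (add_one_div_sub_one_le_exp hβ) _
      _ = Real.exp 4 ^ s := by
          rw [← Real.exp_nat_mul, ← Real.exp_mul, hs]
          ring_nf
  calc ((intL1Ball ι ⌊s⌋₊).card : ℝ) ≤ β ^ ⌊s⌋₊ * ((β + 1) / (β - 1)) ^ Fintype.card ι :=
        card_intL1Ball_le (by linarith) _
    _ ≤ β ^ s * Real.exp 4 ^ s := mul_le_mul hpow hexp (by positivity) (by positivity)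
    _ = (Real.exp 4 * β) ^ s := by rw [Real.mul_rpow (by positivity) (by linarith), mul_comm]

end IntL1Ball

section lpnorm

variable {m : ℕ}

lemma sum_abs_rpow_le_of_lpnorm_le {p R : ℝ} (hp : 0 < p) {x : Fin m → ℝ}
    (hx : lpnorm (ENNReal.ofReal p) x ≤ R) : ∑ i, |x i| ^ p ≤ R ^ p := by
  rw [lpnorm, if_neg ENNReal.ofReal_ne_top, ENNReal.toReal_ofReal hp.le] at hx
  have hS : 0 ≤ ∑ i, |x i| ^ p := sum_nonneg fun i _ => by positivity
  calc ∑ i, |x i| ^ p = ((∑ i, |x i| ^ p) ^ (1 / p)) ^ p := by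
        rw [← Real.rpow_mul hS, one_div_mul_cancel hp.ne', Real.rpow_one]
    _ ≤ R ^ p := Real.rpow_le_rpow (by positivity) hx hp.le

lemma lpnorm_le_of_abs_le {q : ℝ≥0∞} (hq : q ≠ 0) {x : Fin m → ℝ} {r : ℝ} (hr : 0 ≤ r)
    (hx : ∀ i, |x i| ≤ r) : lpnorm q x ≤ (m : ℝ) ^ (1 / q).toReal * r := by
  rw [lpnorm]
  split_ifs with hqtop
  · simpa [hqtop] using Real.iSup_le hx hr
  have hq₀ : 0 < q.toReal := ENNReal.toReal_pos hq hqtop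
  have hsum : ∑ i, |x i| ^ q.toReal ≤ m * r ^ q.toReal :=
    calc ∑ i, |x i| ^ q.toReal ≤ ∑ _i : Fin m, r ^ q.toReal :=
          sum_le_sum fun i _ => Real.rpow_le_rpow (abs_nonneg _) (hx i) hq₀.le
      _ = m * r ^ q.toReal := by simp
  calc (∑ i, |x i| ^ q.toReal) ^ (1 / q.toReal) ≤ (m * r ^ q.toReal) ^ (1 / q.toReal) :=
        Real.rpow_le_rpow (sum_nonneg fun i _ => by positivity) hsum (by positivity)
    _ = (m : ℝ) ^ (1 / q).toReal * r := by
        rw [Real.mul_rpow (by positivity) (by positivity), ← Real.rpow_mul hr,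
          mul_one_div_cancel hq₀.ne', Real.rpow_one]
        simp only [one_div, ENNReal.toReal_inv]

lemma exists_mem_intL1Ball_lpnorm_sub_le {p δ s : ℝ} (hp : 1 ≤ p) {q : ℝ≥0∞} (hq : q ≠ 0)
    (hδ : 0 < δ) {x : Fin m → ℝ} (hx : ∑ i, |x i| ^ p ≤ δ ^ p * s) :
    ∃ z ∈ intL1Ball (Fin m) ⌊s⌋₊,
      lpnorm q (x - δ • fun i => (z i : ℝ)) ≤ (m : ℝ) ^ (1 / q).toReal * δ := by
  set z : Fin m → ℤ := fun i => roundTowardZero (x i / δ)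
  have hz : ∑ i, ((z i).natAbs : ℝ) ≤ s := by
    calc ∑ i, ((z i).natAbs : ℝ) ≤ ∑ i, |x i / δ| ^ p :=
          sum_le_sum fun i _ => natAbs_roundTowardZero_le_rpow hp _
      _ = (∑ i, |x i| ^ p) / δ ^ p := by
          simp_rw [abs_div, abs_of_pos hδ, Real.div_rpow (abs_nonneg _) hδ.le, sum_div]
      _ ≤ s := by rwa [div_le_iff₀' (by positivity)]
  refine ⟨z, mem_intL1Ball.2 (Nat.le_floor (by exact_mod_cast hz)),
    lpnorm_le_of_abs_le hq hδ.le fun i => ?_⟩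
  calc |(x - δ • fun i => (z i : ℝ)) i| = δ * |x i / δ - z i| := by
        rw [← abs_of_pos hδ, ← abs_mul, abs_of_pos hδ, mul_sub, mul_div_cancel₀ _ hδ.ne']
        rfl
    _ ≤ δ := mul_le_of_le_one_right hδ.le (abs_sub_roundTowardZero_le _)

end lpnorm

theorem stmt_9 (m : ℕ) (hm : 1 ≤ m) (p : ℝ) (q : ℝ≥0∞) (hp : 1 ≤ p)
    (hpq : ENNReal.ofReal p ≤ q) (α : ℝ) (hα : Real.exp 1 ≤ α) :
    ∃ C : Finset (Fin m → ℝ),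
      ((C.card : ℝ) ≤ (Real.exp 4 * α ^ p) ^ ((m : ℝ) / α ^ p)) ∧
      ∀ x : Fin m → ℝ, lpnorm (ENNReal.ofReal p) x ≤ (m : ℝ) ^ (1 / p - (1 / q).toReal) →
        ∃ c ∈ C, lpnorm q (x - c) ≤ α := by
  have hα₂ : 2 ≤ α := by linarith [Real.add_one_le_exp 1]
  have hβ : 2 ≤ α ^ p := hα₂.trans (Real.self_le_rpow_of_one_le (by linarith) hp)
  have hm₀ : (0 : ℝ) < m := by exact_mod_cast hm
  have hq : q ≠ 0 := ((ENNReal.ofReal_pos.2 (by linarith)).trans_le hpq).ne'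
  set r := (1 / q).toReal
  set δ := α / (m : ℝ) ^ r
  have hδ : 0 < δ := by positivity
  have hradius : ((m : ℝ) ^ (1 / p - r)) ^ p = δ ^ p * (Fintype.card (Fin m) / α ^ p) := by
    rw [Fintype.card_fin, Real.div_rpow (by positivity) (by positivity), ← Real.rpow_mul hm₀.le,
      ← Real.rpow_mul hm₀.le, sub_mul, one_div_mul_cancel (by positivity), Real.rpow_sub hm₀,
      Real.rpow_one]
    field_simp
  set B := intL1Ball (Fin m) ⌊(Fintype.card (Fin m) : ℝ) / α ^ p⌋₊
  refine ⟨B.image fun z => δ • fun i => (z i : ℝ), ?_, fun x hx => ?_⟩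
  · calc _ ≤ (B.card : ℝ) := Nat.cast_le.2 card_image_le
      _ ≤ _ := by simpa [B] using card_intL1Ball_floor_le (ι := Fin m) hβ
  · obtain ⟨z, hz, hxz⟩ := exists_mem_intL1Ball_lpnorm_sub_le hp hq hδ
      ((sum_abs_rpow_le_of_lpnorm_le (by linarith) hx).trans_eq hradius)
    exact ⟨_, mem_image_of_mem _ hz, hxz.trans_eq (mul_div_cancel₀ α (by positivity))⟩
end

section
/- Fix a prime $Q \ge 2$ and vectors $\vec{v}_1, \ldots, \vec{v}_N, \vec{y}_1, \ldots, \vec{y}_N \in \mathbb{Z}_Q^n$ with $\vec{v}_i \ne \vec{0}$ for all $i$ and $\vec{y}_i \ne \vec{y}_1$ for all $i > 1$. If $\vec{z}, \vec{c} \in \mathbb{Z}_Q^n$ are sampled uniformly and independently, then the probability that $\langle \vec{z}, \vec{y}_1 + \vec{c} \rangle = 0$, and $\langle \vec{z}, \vec{v}_i \rangle \ne 0$ for all $i$, and $\langle \vec{z}, \vec{y}_i + \vec{c} \rangle \ne 0$ for all $i > 1$ (all mod $Q$) lies between $\frac{1}{Q} - \frac{2N}{Q^2} - \frac{N}{Q^n}$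 and $\frac{1}{Q} + \frac{1}{Q^n}$. -/
/-!
Once `z ≠ 0` is fixed, `{c | z ⬝ᵥ (y₁ + c) = 0}` is an affine hyperplane with `Q ^ (n - 1)`
points, and on it `z ⬝ᵥ (yᵢ + c) = z ⬝ᵥ (yᵢ - y₁)` no longer depends on `c`. Hence the event is
`z ⬝ᵥ (y₁ + c) = 0` with `z` a *good* direction, orthogonal to none of the nonzero vectors `vᵢ`
and `yᵢ - y₁` (`i > 1`), and the number of pairs is `Q ^ (n - 1)` times the number of good `z`.
There are at most `Q ^ n` good `z`, and each of the at most `2N` forbidden orthogonal complements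
has `Q ^ (n - 1)` points, so a union bound leaves at least `Q ^ n - 2N Q ^ (n - 1)` good `z`.
The probability therefore lies between `1/Q - 2N/Q²` and `1/Q`.
-/

open Finset Matrix

lemma AddMonoidHom.card_fiber_mul_card_of_surjective {G M : Type*} [AddGroup G] [Fintype G]
    [AddGroup M] [Fintype M] [DecidableEq M] {f : G →+ M} (hf : Function.Surjective f) (x : M) :
    #{g | f g = x} * Fintype.card M = Fintype.card G := by
  have hfiber (y : M) : #{g | f g = y} = #{g | f g = x} :=
    AddMonoidHom.card_fiber_eq_of_mem_range f (hf y) (hf x)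
  calc #{g | f g = x} * Fintype.card M = ∑ y : M, #{g | f g = y} := by simp [hfiber, mul_comm]
    _ = Fintype.card G := (card_eq_sum_card_fiberwise fun _ _ => mem_univ _).symm

lemma Matrix.dotProduct_left_surjective {F ι : Type*} [Field F] [Fintype ι] [DecidableEq ι]
    {w : ι → F} (hw : w ≠ 0) : Function.Surjective fun z : ι → F => z ⬝ᵥ w := by
  obtain ⟨j, hj⟩ := Function.ne_iff.mp hw
  intro a
  exact ⟨Pi.single j (a / w j), by simp [single_dotProduct, div_mul_cancel₀ _ hj]⟩

section Hyperplane

variable {R ι : Type*} [NonUnitalNonAssocRing R] [Fintype ι]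

lemma dotProduct_add_eq_of_dotProduct_add_eq_zero {z u u' c : ι → R} (h : z ⬝ᵥ (u' + c) = 0) :
    z ⬝ᵥ (u + c) = z ⬝ᵥ (u - u') := by
  rw [← add_zero (z ⬝ᵥ (u - u')), ← h, ← dotProduct_add]
  congr 1
  abel

lemma dotProduct_add_eq_zero_and_ne_zero_iff {κ : Type*} (i0 : κ) (v y : κ → ι → R)
    (z c : ι → R) :
    (z ⬝ᵥ (y i0 + c) = 0 ∧ (∀ i, z ⬝ᵥ v i ≠ 0) ∧ ∀ i, i ≠ i0 → z ⬝ᵥ (y i + c) ≠ 0) ↔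
      (∀ k, z ⬝ᵥ Sum.elim v (fun i : {i // i ≠ i0} => y i - y i0) k ≠ 0) ∧
        z ⬝ᵥ (y i0 + c) = 0 := by
  simp only [Sum.forall, Sum.elim_inl, Sum.elim_inr, Subtype.forall]
  constructor
  · rintro ⟨h0, hv, hy⟩
    exact ⟨⟨hv, fun i hi => dotProduct_add_eq_of_dotProduct_add_eq_zero h0 ▸ hy i hi⟩, h0⟩
  · rintro ⟨⟨hv, hy⟩, h0⟩
    exact ⟨h0, hv, fun i hi => (dotProduct_add_eq_of_dotProduct_add_eq_zero h0).symm ▸ hy i hi⟩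

end Hyperplane

section DotProduct

variable {F ι : Type*} [Field F] [Fintype F] [DecidableEq F] [Fintype ι] [DecidableEq ι]

lemma card_filter_dotProduct_eq_mul_card {w : ι → F} (hw : w ≠ 0) (a : F) :
    #{z : ι → F | z ⬝ᵥ w = a} * Fintype.card F = Fintype.card F ^ Fintype.card ι := by
  rw [← Fintype.card_fun]
  exact AddMonoidHom.card_fiber_mul_card_of_surjective
    (f := AddMonoidHom.mk' (fun z : ι → F => z ⬝ᵥ w) fun z z' => add_dotProduct z z' w)
    (dotProduct_left_surjective hw) a

lemma card_filter_dotProduct_add_eq_zero_mul_card {z : ι → F} (hz : z ≠ 0) (u : ι → F) :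
    #{c : ι → F | z ⬝ᵥ (u + c) = 0} * Fintype.card F = Fintype.card F ^ Fintype.card ι := by
  have hiff (c : ι → F) : z ⬝ᵥ (u + c) = 0 ↔ c ⬝ᵥ z = -(z ⬝ᵥ u) := by
    rw [dotProduct_add, dotProduct_comm z c, add_comm, add_eq_zero_iff_eq_neg]
  simp_rw [hiff]
  exact card_filter_dotProduct_eq_mul_card hz _

lemma card_filter_prod_dotProduct_add_eq_zero_mul_card (p : (ι → F) → Prop) [DecidablePred p]
    (hp : ∀ z, p z → z ≠ 0) (u : ι → F) :
    #{zc : (ι → F) × (ι → F) | p zc.1 ∧ zc.1 ⬝ᵥ (u + zc.2) = 0} * Fintype.card F =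
      #{z | p z} * Fintype.card F ^ Fintype.card ι := by
  have hsplit : #{zc : (ι → F) × (ι → F) | p zc.1 ∧ zc.1 ⬝ᵥ (u + zc.2) = 0} =
      ∑ z with p z, #{c : ι → F | z ⬝ᵥ (u + c) = 0} := by
    rw [card_filter, Fintype.sum_prod_type, sum_filter]
    refine sum_congr rfl fun z _ => ?_
    split_ifs with h <;> simp only [h, true_and, false_and, card_filter, if_false, sum_const_zero]
  rw [hsplit, sum_mul, sum_congr rfl fun z hz =>
    card_filter_dotProduct_add_eq_zero_mul_card (hp z (mem_filter.mp hz).2) u, sum_const,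
    smul_eq_mul]

lemma card_filter_exists_dotProduct_eq_zero_mul_card_le {κ : Type*} [Fintype κ]
    {w : κ → ι → F} (hw : ∀ k, w k ≠ 0) :
    #{z : ι → F | ∃ k, z ⬝ᵥ w k = 0} * Fintype.card F ≤
      Fintype.card κ * Fintype.card F ^ Fintype.card ι := by
  have hunion : ({z | ∃ k, z ⬝ᵥ w k = 0} : Finset (ι → F)) =
      univ.biUnion fun k => {z | z ⬝ᵥ w k = 0} := by
    ext z; simp
  calc #{z : ι → F | ∃ k, z ⬝ᵥ w k = 0} * Fintype.card F
      ≤ (∑ k, #{z : ι → F | z ⬝ᵥ w k = 0}) * Fintype.card F := by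
        rw [hunion]; gcongr; exact card_biUnion_le
    _ = Fintype.card κ * Fintype.card F ^ Fintype.card ι := by
        simp [sum_mul, card_filter_dotProduct_eq_mul_card (hw _)]

lemma pow_card_mul_card_le_card_filter_forall_dotProduct_ne_zero {κ : Type*} [Fintype κ]
    {w : κ → ι → F} (hw : ∀ k, w k ≠ 0) :
    Fintype.card F ^ Fintype.card ι * Fintype.card F ≤
      #{z : ι → F | ∀ k, z ⬝ᵥ w k ≠ 0} * Fintype.card F +
        Fintype.card κ * Fintype.card F ^ Fintype.card ι := by
  have hpart := card_filter_add_card_filter_not (s := univ) fun z : ι → F => ∀ k, z ⬝ᵥ w k ≠ 0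
  simp only [card_univ, Fintype.card_fun, not_forall, not_not] at hpart
  calc Fintype.card F ^ Fintype.card ι * Fintype.card F
      = #{z : ι → F | ∀ k, z ⬝ᵥ w k ≠ 0} * Fintype.card F +
          #{z : ι → F | ∃ k, z ⬝ᵥ w k = 0} * Fintype.card F := by rw [← hpart, add_mul]
    _ ≤ _ := Nat.add_le_add_left (card_filter_exists_dotProduct_eq_zero_mul_card_le hw) _

end DotProduct

lemma bounds_div_mul_self_of_mul_eq {q m G P N : ℝ} (hq : 0 < q) (hm : 0 < m) (hN : 0 ≤ N)
    (hG : G * q = P * m) (hP : P ≤ m) (hbad : m * q ≤ P * q + 2 * N * m) :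
    1 / q - 2 * N / q ^ 2 - N / m ≤ G / (m * m) ∧ G / (m * m) ≤ 1 / q + 1 / m := by
  have hGP : G / (m * m) = P / (q * m) := by
    rw [div_eq_div_iff (by positivity) (by positivity)]
    linear_combination m * hG
  rw [hGP]
  constructor
  · have : 1 / q - 2 * N / q ^ 2 ≤ P / (q * m) := by
      rw [le_div_iff₀ (by positivity)]
      field_simp
      nlinarith
    linarith [div_nonneg hN hm.le]
  · calc P / (q * m) ≤ m / (q * m) := by gcongr
      _ = 1 / q := by field_simp
      _ ≤ 1 / q + 1 / m := le_add_of_nonneg_right (by positivity)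

theorem stmt_12 (Q n N : ℕ) (hQ : Q.Prime) (hN : 0 < N)
    (v y : Fin N → Fin n → ZMod Q)
    (hv : ∀ i, v i ≠ 0)
    (hy : ∀ i : Fin N, i ≠ ⟨0, hN⟩ → y i ≠ y ⟨0, hN⟩) :
    (1 / Q - 2 * N / Q ^ 2 - N / Q ^ n : ℝ) ≤
        (Nat.card {zc : (Fin n → ZMod Q) × (Fin n → ZMod Q) //
          (∑ j, zc.1 j * (y ⟨0, hN⟩ j + zc.2 j)) = 0 ∧
          (∀ i, (∑ j, zc.1 j * v i j) ≠ 0) ∧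
          ∀ i : Fin N, i ≠ ⟨0, hN⟩ → (∑ j, zc.1 j * (y i j + zc.2 j)) ≠ 0} : ℝ)
          / (Q ^ n * Q ^ n) ∧
      (Nat.card {zc : (Fin n → ZMod Q) × (Fin n → ZMod Q) //
          (∑ j, zc.1 j * (y ⟨0, hN⟩ j + zc.2 j)) = 0 ∧
          (∀ i, (∑ j, zc.1 j * v i j) ≠ 0) ∧
          ∀ i : Fin N, i ≠ ⟨0, hN⟩ → (∑ j, zc.1 j * (y i j + zc.2 j)) ≠ 0} : ℝ)
          / (Q ^ n * Q ^ n) ≤ 1 / Q + 1 / Q ^ n := by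
  have : Fact Q.Prime := ⟨hQ⟩
  set i0 : Fin N := ⟨0, hN⟩
  set w : Fin N ⊕ {i // i ≠ i0} → Fin n → ZMod Q := Sum.elim v fun i => y i - y i0
  have hw : ∀ k, w k ≠ 0 := by
    rintro (i | ⟨i, hi⟩)
    · exact hv i
    · exact sub_ne_zero.mpr (hy i hi)
  have hgood_ne_zero (z : Fin n → ZMod Q) (hz : ∀ k, z ⬝ᵥ w k ≠ 0) : z ≠ 0 := by
    rintro rfl
    exact hz (.inl i0) (zero_dotProduct _)
  have hcard_w : Fintype.card (Fin N ⊕ {i // i ≠ i0}) ≤ 2 * N := by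
    rw [Fintype.card_sum, Fintype.card_fin, two_mul]
    exact Nat.add_le_add_left ((Fintype.card_subtype_le _).trans_eq (Fintype.card_fin N)) N
  have hpairs := card_filter_prod_dotProduct_add_eq_zero_mul_card _ hgood_ne_zero (y i0)
  have hgood := pow_card_mul_card_le_card_filter_forall_dotProduct_ne_zero hw
  simp only [ZMod.card, Fintype.card_fin] at hpairs hgood
  have hQ_pos : (0 : ℝ) < Q := by exact_mod_cast hQ.pos
  refine bounds_div_mul_self_of_mul_eq (P := #{z : Fin n → ZMod Q | ∀ k, z ⬝ᵥ w k ≠ 0})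
    hQ_pos (pow_pos hQ_pos n) N.cast_nonneg ?_ ?_ ?_
  · rw [Nat.card_eq_fintype_card, Fintype.card_subtype]
    exact_mod_cast (congrArg (fun s => #s * Q) (filter_congr fun zc _ =>
      dotProduct_add_eq_zero_and_ne_zero_iff i0 v y zc.1 zc.2)).trans hpairs
  · exact_mod_cast (card_filter_le _ _).trans_eq (by simp)
  · exact_mod_cast hgood.trans (Nat.add_le_add_left (Nat.mul_le_mul_right _ hcard_w) _)
end
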